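/- (Lemma 5.) Let S = {o₁, …, o_m} with o₁ < ⋯ < o_m be a set of vertices that two-sided guards every point of the terrain, let 1 ≤ i ≤ m, let N be the rightmost point not right-guarded by {o_i, …, o_m}, and let r = R(N) be the rightmost vertex that sees N. Suppose r ∉ O_R(N). Then for every point x of the terrain with r < x and every g ∈ O_R(N), g does not left-guard x (i.e., g does not see x). -/

import Mathlib

/-- `p` sees `q` on terrain `T`: the segment joining `(p, T p)` and `(q, T q)`
lies on or above the graph of `T`. -/
def Sees (T : ℝ → ℝ) (p q : ℝ) : Prop :=
  ∀ t ∈ Set.Icc (0 : ℝ) 1, T ((1 - t) * p + t * q) ≤ (1 - t) * T p + t * T q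

/-- `v` left-guards `p`: `v` is on or to the left of `p` and sees `p`. -/
def LeftGuards (T : ℝ → ℝ) (v p : ℝ) : Prop := v ≤ p ∧ Sees T v p

/-- `v` right-guards `p`: `v` is on or to the right of `p` and sees `p`. -/
def RightGuards (T : ℝ → ℝ) (v p : ℝ) : Prop := p ≤ v ∧ Sees T v p

/-- A set `S` two-sided guards `p` if some member left-guards `p` and some member
right-guards `p`. -/
def TwoSidedGuards (T : ℝ → ℝ) (S : Set ℝ) (p : ℝ) : Prop :=
  (∃ v ∈ S, LeftGuards T v p) ∧ (∃ v ∈ S, RightGuards T v p)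

/-- A 1.5D terrain with `n + 1` vertices: an `x`-monotone polygonal chain, given by
strictly increasing vertex abscissas `x 0 < ⋯ < x n` and a height function `T` which is
continuous on `[x 0, x n]` and affine on each edge interval `[x j, x (j+1)]`. -/
structure Terrain (n : ℕ) where
  x : Fin (n + 1) → ℝ
  mono : StrictMono x
  T : ℝ → ℝ
  cont : ContinuousOn T (Set.Icc (x 0) (x (Fin.last n)))
  affine : ∀ j : Fin n, ∀ t ∈ Set.Icc (0 : ℝ) 1,
    T ((1 - t) * x j.castSucc + t * x j.succ) =
      (1 - t) * T (x j.castSucc) + t * T (x j.succ)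

/-!
Suppose a guard `g` of `O_R(N)` saw a point `p > r`. Every vertex seeing `N` lies at or left
of `r = R(N)`, and `g ≠ r` because `r ∉ O_R(N)`, so `N ≤ g < r < p`. The sight lines `N`–`r`
and `g`–`p` cross, and two crossing sight lines combine into one between their outer
endpoints: `N` sees `p`. On the terrain edge `[u, v]` containing `p` with `r ≤ u < p`, the
terrain is affine, so `v` lies on or above the line from `N` through `p` and therefore also
sees `N`; but `v > r`, contradicting the choice of `r`.
-/

open Set

-- Cleared of the denominator `b - a`; meaningful for `a < b`.
def BelowChord (T : ℝ → ℝ) (a b s : ℝ) : Prop :=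
  (b - a) * T s ≤ (b - s) * T a + (s - a) * T b

section Chords

variable {T : ℝ → ℝ} {a b c d s : ℝ}

theorem Sees.symm (h : Sees T a b) : Sees T b a := by
  intro t ht
  have h' := h (1 - t) ⟨by linarith [ht.2], by linarith [ht.1]⟩
  rw [show (1 - (1 - t)) * a + (1 - t) * b = (1 - t) * b + t * a by ring] at h'
  linarith

theorem sees_iff_forall_belowChord (hab : a < b) :
    Sees T a b ↔ ∀ s ∈ Icc a b, BelowChord T a b s := by
  have hba : 0 < b - a := sub_pos.2 hab
  constructor
  · intro h s hs
    have ht : (s - a) / (b - a) ∈ Icc (0 : ℝ) 1 :=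
      ⟨div_nonneg (by linarith [hs.1]) hba.le, (div_le_one hba).2 (by linarith [hs.2])⟩
    have h' := h _ ht
    rw [show (1 - (s - a) / (b - a)) * a + (s - a) / (b - a) * b = s by field_simp; ring] at h'
    have e : (b - a) * ((1 - (s - a) / (b - a)) * T a + (s - a) / (b - a) * T b) =
        (b - s) * T a + (s - a) * T b := by
      field_simp
      ring
    rw [BelowChord, ← e]
    exact mul_le_mul_of_nonneg_left h' hba.le
  · intro h t ht
    have h' := h ((1 - t) * a + t * b) ⟨by nlinarith [ht.1, ht.2], by nlinarith [ht.1, ht.2]⟩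
    unfold BelowChord at h'
    refine le_of_mul_le_mul_left ?_ hba
    linarith

theorem BelowChord.trans_left (hs : BelowChord T a c s) (hc : BelowChord T a d c)
    (has : a ≤ s) (hac : a < c) (hcd : c ≤ d) : BelowChord T a d s := by
  unfold BelowChord at *
  refine le_of_mul_le_mul_left ?_ (sub_pos.2 hac)
  nlinarith [mul_le_mul_of_nonneg_left hs (by linarith : (0 : ℝ) ≤ d - a),
    mul_le_mul_of_nonneg_left hc (by linarith : (0 : ℝ) ≤ s - a)]

theorem BelowChord.trans_right (hs : BelowChord T b d s) (hb : BelowChord T a d b)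
    (hab : a ≤ b) (hbd : b < d) (hsd : s ≤ d) : BelowChord T a d s := by
  unfold BelowChord at *
  refine le_of_mul_le_mul_left ?_ (sub_pos.2 hbd)
  nlinarith [mul_le_mul_of_nonneg_left hs (by linarith : (0 : ℝ) ≤ d - a),
    mul_le_mul_of_nonneg_left hb (by linarith : (0 : ℝ) ≤ d - s)]

theorem BelowChord.of_interleaved (hb : BelowChord T a c b) (hc : BelowChord T b d c)
    (hab : a ≤ b) (hbc : b < c) (hcd : c ≤ d) : BelowChord T a d c := by
  unfold BelowChord at *
  refine le_of_mul_le_mul_left ?_ (sub_pos.2 hbc)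
  nlinarith [mul_le_mul_of_nonneg_left hb (by linarith : (0 : ℝ) ≤ d - c),
    mul_le_mul_of_nonneg_left hc (by linarith : (0 : ℝ) ≤ c - a)]

theorem Sees.of_interleaved (hac : Sees T a c) (hbd : Sees T b d)
    (hab : a ≤ b) (hbc : b < c) (hcd : c ≤ d) : Sees T a d := by
  have hac' := (sees_iff_forall_belowChord (hab.trans_lt hbc)).1 hac
  have hbd' := (sees_iff_forall_belowChord (hbc.trans_le hcd)).1 hbd
  have hb : BelowChord T a c b := hac' b ⟨hab, hbc.le⟩
  have hc : BelowChord T a d c := hb.of_interleaved (hbd' c ⟨hbc.le, hcd⟩) hab hbc hcd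
  have hb' : BelowChord T a d b := hb.trans_left hc hab (hab.trans_lt hbc) hcd
  refine (sees_iff_forall_belowChord (by linarith)).2 fun s hs => ?_
  rcases le_total s c with hsc | hcs
  · exact (hac' s ⟨hs.1, hsc⟩).trans_left hc hs.1 (hab.trans_lt hbc) hcd
  · exact (hbd' s ⟨by linarith, hs.2⟩).trans_right hb' hab (hbc.trans_le hcd) hs.2

theorem Sees.of_eqOn_affine {u p v α β : ℝ} (h : Sees T a p)
    (hT : EqOn T (fun s => α * s + β) (Icc u v)) (hau : a ≤ u) (hup : u < p) (hpv : p ≤ v) :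
    Sees T a v := by
  rcases hpv.eq_or_lt with rfl | hpv
  · exact h
  have hap : a < p := hau.trans_lt hup
  have h' := (sees_iff_forall_belowChord hap).1 h
  have hTp : T p = α * p + β := hT ⟨hup.le, hpv.le⟩
  have hTv : T v = α * v + β := hT ⟨(hup.trans hpv).le, le_rfl⟩
  -- `u` is below the line from `a` through `p` and `T` is affine on `[u, v]`, so `v` is above it.
  have hp : BelowChord T a v p := by
    have hu := h' u ⟨hau, hup.le⟩
    unfold BelowChord at *
    rw [hT ⟨le_rfl, (hup.trans hpv).le⟩, hTp] at hu
    rw [hTp, hTv]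
    refine le_of_mul_le_mul_left ?_ (sub_pos.2 hup)
    nlinarith [mul_le_mul_of_nonneg_left hu (by linarith : (0 : ℝ) ≤ v - p)]
  refine (sees_iff_forall_belowChord (hap.trans hpv)).2 fun s hs => ?_
  rcases le_total s p with hsp | hps
  · exact (h' s ⟨hs.1, hsp⟩).trans_left hp hs.1 hap hpv.le
  · have hs' : BelowChord T p v s := by
      unfold BelowChord
      rw [hT ⟨hup.le.trans hps, hs.2⟩, hTp, hTv]
      exact le_of_eq (by ring)
    exact hs'.trans_right hp hap.le hpv hs.2

end Chords

namespace Terrain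

variable {n : ℕ} (Ter : Terrain n)

theorem exists_affine_on_edge (j : Fin n) :
    ∃ α β : ℝ, EqOn Ter.T (fun s => α * s + β) (Icc (Ter.x j.castSucc) (Ter.x j.succ)) := by
  set u := Ter.x j.castSucc
  set v := Ter.x j.succ
  have huv : 0 < v - u := sub_pos.2 (Ter.mono Fin.castSucc_lt_succ)
  refine ⟨(Ter.T v - Ter.T u) / (v - u), Ter.T u - (Ter.T v - Ter.T u) / (v - u) * u,
    fun s hs => ?_⟩
  have ht : (s - u) / (v - u) ∈ Icc (0 : ℝ) 1 :=
    ⟨div_nonneg (by linarith [hs.1]) huv.le, (div_le_one huv).2 (by linarith [hs.2])⟩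
  have h := Ter.affine j _ ht
  rw [show (1 - (s - u) / (v - u)) * u + (s - u) / (v - u) * v = s by field_simp; ring] at h
  simp only [h]
  field_simp
  ring

theorem exists_edge_of_vertex_lt {r p : ℝ} (hr : r ∈ range Ter.x) (hrp : r < p)
    (hp : p ≤ Ter.x (Fin.last n)) :
    ∃ j : Fin n, r ≤ Ter.x j.castSucc ∧ Ter.x j.castSucc < p ∧ p ≤ Ter.x j.succ := by
  classical
  obtain ⟨k, rfl⟩ := hr
  let S := Finset.univ.filter fun j => p ≤ Ter.x j
  have hS : S.Nonempty := ⟨Fin.last n, by simpa [S] using hp⟩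
  have hmin : p ≤ Ter.x (S.min' hS) := (Finset.mem_filter.1 (S.min'_mem hS)).2
  have hk : k < S.min' hS := Ter.mono.lt_iff_lt.1 (hrp.trans_le hmin)
  obtain ⟨j, hj⟩ := Fin.exists_succ_eq.2 ((Fin.zero_le k).trans_lt hk).ne'
  rw [← hj] at hk hmin
  refine ⟨j, Ter.mono.monotone (Fin.le_castSucc_iff.2 hk), not_le.1 fun h => ?_, hmin⟩
  have := S.min'_le j.castSucc (by simp [S, h])
  rw [← hj] at this
  exact Fin.castSucc_lt_succ.not_ge this

theorem exists_vertex_gt_sees_of_sees {N r p : ℝ} (hr : r ∈ range Ter.x) (hNr : N ≤ r)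
    (hrp : r < p) (hp : p ≤ Ter.x (Fin.last n)) (hNp : Sees Ter.T N p) :
    ∃ v ∈ range Ter.x, r < v ∧ Sees Ter.T v N := by
  obtain ⟨j, hru, hup, hpv⟩ := Ter.exists_edge_of_vertex_lt hr hrp hp
  obtain ⟨α, β, hT⟩ := Ter.exists_affine_on_edge j
  exact ⟨_, ⟨j.succ, rfl⟩, hrp.trans_le hpv,
    (hNp.of_eqOn_affine hT (hNr.trans hru) hup hpv).symm⟩

end Terrain

theorem lemma5_cannot_guard_general {n m : ℕ} (Ter : Terrain n)
    (o : Fin m → ℝ)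
    (ho_vert : ∀ k : Fin m, o k ∈ Set.range Ter.x)
    (ho_guard : ∀ p ∈ Set.Icc (Ter.x 0) (Ter.x (Fin.last n)),
      TwoSidedGuards Ter.T (Set.range o) p)
    (N : ℝ) (hN : N ∈ Set.Icc (Ter.x 0) (Ter.x (Fin.last n)))
    (r : ℝ) (hr_vert : r ∈ Set.range Ter.x)
    (hr_sees : Sees Ter.T r N)
    (hr_max : ∀ v ∈ Set.range Ter.x, r < v → ¬ Sees Ter.T v N)
    (hr_not : ¬ (r ∈ Set.range o ∧ RightGuards Ter.T r N)) :
    ∀ p ∈ Set.Icc (Ter.x 0) (Ter.x (Fin.last n)), r < p →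
      ∀ g ∈ Set.range o, RightGuards Ter.T g N → ¬ Sees Ter.T g p := by
  rintro p hp hrp _ ⟨k, rfl⟩ hgN hgp
  have le_r : ∀ l, Sees Ter.T (o l) N → o l ≤ r := fun l h =>
    not_lt.1 fun hlt => hr_max _ (ho_vert l) hlt h
  obtain ⟨_, ⟨l, rfl⟩, hlN⟩ := (ho_guard N hN).2
  have hNr : N ≤ r := hlN.1.trans (le_r l hlN.2)
  have hgr : o k < r := (le_r k hgN.2).lt_of_ne fun h => hr_not ⟨⟨k, h⟩, h ▸ hgN⟩
  have hNp : Sees Ter.T N p := hr_sees.symm.of_interleaved hgp hgN.1 hgr hrp.le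
  obtain ⟨v, hv, hrv, hvN⟩ := Ter.exists_vertex_gt_sees_of_sees hr_vert hNr hrp hp.2 hNp
  exact hr_max v hv hrv hvN

/-- **Lemma 5.** With `N` the rightmost point not right-guarded by `{o i, …, o m}` and
`r = R(N)` the rightmost vertex seeing `N`, if `r ∉ O_R(N)` then no guard of `O_R(N)`
can left-guard (indeed, see) any point strictly right of `r`. -/
theorem lemma5_cannot_guard {n m : ℕ} (Ter : Terrain n) (hn : 1 ≤ n)
    (o : Fin m → ℝ) (ho_mono : StrictMono o)
    (ho_vert : ∀ k : Fin m, o k ∈ Set.range Ter.x)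
    (ho_guard : ∀ p ∈ Set.Icc (Ter.x 0) (Ter.x (Fin.last n)),
      TwoSidedGuards Ter.T (Set.range o) p)
    (i : Fin m)
    (N : ℝ) (hN : N ∈ Set.Icc (Ter.x 0) (Ter.x (Fin.last n)))
    (hN_not : ∀ j : Fin m, i ≤ j → ¬ RightGuards Ter.T (o j) N)
    (hN_max : ∀ p ∈ Set.Icc (Ter.x 0) (Ter.x (Fin.last n)), N < p →
      ∃ j : Fin m, i ≤ j ∧ RightGuards Ter.T (o j) p)
    (r : ℝ) (hr_vert : r ∈ Set.range Ter.x)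
    (hr_sees : Sees Ter.T r N)
    (hr_max : ∀ v ∈ Set.range Ter.x, r < v → ¬ Sees Ter.T v N)
    (hr_not : ¬ (r ∈ Set.range o ∧ RightGuards Ter.T r N)) :
    ∀ p ∈ Set.Icc (Ter.x 0) (Ter.x (Fin.last n)), r < p →
      ∀ g ∈ Set.range o, RightGuards Ter.T g N → ¬ Sees Ter.T g p :=
  lemma5_cannot_guard_general Ter o ho_vert ho_guard N hN r hr_vert hr_sees hr_max hr_not
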